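/- arXiv:1306.0771 — 3 statements merged into one kernel-verified Lean document; each statement's English description precedes it below -/
import Mathlib

section
/- For even n, the optimal offline aggregate frequency on W_n equals n/2 - 1/2 + 1/n, and for odd n it equals n/2 - 1 + 3/(2n). -/
open scoped BigOperators

noncomputable section

/-- frequency of item `a` in sequence `I` -/
def freq (I : List ℕ) (a : ℕ) : ℝ := (I.count a : ℝ) / (I.length : ℝ)

/-- profit (aggregate frequency) of buffer sequence `S` against input `I` -/
def profit (I S : List ℕ) : ℝ := (S.map (freq I)).sum

/-- Naive algorithm: buffers every arriving item. -/
def naiP (I : List ℕ) : ℝ := profit I I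

/-- Buffers of the eager algorithm: buffer each arriving item until the first
repeated item (two equal consecutive items), then keep it forever. -/
def eagRun : List ℕ → List ℕ
  | [] => []
  | [x] => [x]
  | x :: y :: rest =>
      if x = y then x :: List.replicate (rest.length + 1) x
      else x :: eagRun (y :: rest)

def eagP (I : List ℕ) : ℝ := profit I (eagRun I)

/-- One step of the Majority algorithm on state (buffer, counter). -/
def majStep (s : ℕ × ℕ) (a : ℕ) : ℕ × ℕ :=
  if s.2 = 0 then (a, 1)
  else if a = s.1 then (s.1, s.2 + 1)
  else (s.1, s.2 - 1)

def majBuffers (I : List ℕ) : List ℕ :=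
  ((List.scanl majStep ((0 : ℕ), (0 : ℕ)) I).tail).map Prod.fst

def majP (I : List ℕ) : ℝ := profit I (majBuffers I)

/-- A valid offline buffer schedule: at each step the buffer holds either the
currently arriving item or the previously buffered item (the first buffered
item must be the first arriving item). -/
def ValidSched (I S : List ℕ) : Prop :=
  S.length = I.length ∧
    ∀ i, i < S.length →
      S.getD i 0 = I.getD i 0 ∨ (0 < i ∧ S.getD i 0 = S.getD (i - 1) 0)

/-- Optimal offline profit. -/
def optP (I : List ℕ) : ℝ := sSup {x | ∃ S, ValidSched I S ∧ x = profit I S}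

/-- Worst-permutation value of an algorithm's profit. -/
def worstP (f : List ℕ → ℝ) (I : List ℕ) : ℝ := sInf {x | ∃ J, J.Perm I ∧ x = f J}

/-- E_n = a,a,b,b,...,b with n-2 copies of b. -/
def Eseq (n a b : ℕ) : List ℕ := a :: a :: List.replicate (n - 2) b

/-- W_n = a_1,a_0,a_2,a_0,... with item 0 playing the role of a_0. -/
def Wseq (n : ℕ) : List ℕ :=
  ((List.range (n / 2)).flatMap fun i => [i + 1, 0]) ++
    (if n % 2 = 1 then [n / 2 + 1] else [])

/-- W'_n = a_1,...,a_⌈n/2⌉,a_0,...,a_0 with ⌊n/2⌋ copies of a_0 = 0. -/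
def Wseq' (n : ℕ) : List ℕ :=
  ((List.range ((n + 1) / 2)).map (· + 1)) ++ List.replicate (n / 2) 0

/-- I_n = ⌈n/2⌉ copies of a_0 = 0 followed by ⌊n/2⌋ distinct items. -/
def Iseq (n : ℕ) : List ℕ :=
  List.replicate ((n + 1) / 2) 0 ++ (List.range (n / 2)).map (· + 1)

/-- D(I): the items of `I` listed in nondecreasing order of frequency. -/
def Dsort (I : List ℕ) : List ℕ :=
  List.insertionSort (fun x y => I.count x ≤ I.count y) I

/-- The interleaving permutation a'_1, a'_n, a'_2, a'_{n-1}, ... of a list. -/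
def interleave : List ℕ → List ℕ
  | [] => []
  | x :: xs => x :: interleave xs.reverse
termination_by l => l.length
decreasing_by set_option linter.unnecessarySimpa false in simpa using Nat.lt_succ_self xs.length

/-- max over sequences of length n of f(I) - g(I). -/
def maxDiff (f g : List ℕ → ℝ) (n : ℕ) : ℝ :=
  sSup {d | ∃ I : List ℕ, I.length = n ∧ d = f I - g I}

/-- min over sequences of length n of f(I) - g(I). -/
def minDiff (f g : List ℕ → ℝ) (n : ℕ) : ℝ :=
  sInf {d | ∃ I : List ℕ, I.length = n ∧ d = f I - g I}

/-- A deterministic online algorithm for the single-buffer frequent items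
problem: the buffer after each nonempty prefix is either the arriving item or
the previous buffer content. -/
structure OnlineAlg where
  buf : List ℕ → ℕ
  first : ∀ x, buf [x] = x
  step : ∀ l x, l ≠ [] → buf (l ++ [x]) = x ∨ buf (l ++ [x]) = buf l

/-- Profit of an online algorithm on input `I`. -/
def oprofit (A : OnlineAlg) (I : List ℕ) : ℝ :=
  ∑ t ∈ Finset.range I.length, freq I (A.buf (I.take (t + 1)))

end

/-! A schedule must buffer `a_1` at step 1, and at each later step it earns at most the largest
frequency, that of `a_0`, namely `⌊n/2⌋/n`. Switching to `a_0` at step 2 and keeping it attains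
this bound, so `Opt(W_n) = (1 + (n - 1)⌊n/2⌋)/n`. -/

lemma freq_le_freq_of_count_le {I : List ℕ} {a b : ℕ} (h : I.count a ≤ I.count b) :
    freq I a ≤ freq I b :=
  div_le_div_of_nonneg_right (by exact_mod_cast h) (Nat.cast_nonneg _)

lemma ValidSched.cons_head {a s : ℕ} {l T : List ℕ} (hS : ValidSched (a :: l) (s :: T)) :
    s = a := by
  simpa using hS.2 0 (by simp)

lemma validSched_cons_replicate (a b : ℕ) (l : List ℕ) :
    ValidSched (a :: b :: l) (a :: List.replicate (l.length + 1) b) := by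
  refine ⟨by simp, fun i hi => ?_⟩
  match i with
  | 0 => simp
  | 1 => simp [List.replicate_succ]
  | j + 2 =>
    right
    simp only [List.length_cons, List.length_replicate] at hi
    simp [List.getD_eq_getElem?_getD, show j < l.length by omega,
      show j ≤ l.length by omega]

lemma profit_le_of_freq_le {a : ℕ} {l S : List ℕ} {q : ℝ} (hS : ValidSched (a :: l) S)
    (hq : ∀ c, freq (a :: l) c ≤ q) :
    profit (a :: l) S ≤ freq (a :: l) a + l.length * q := by
  obtain ⟨s, T, rfl⟩ : ∃ s T, S = s :: T := List.exists_cons_of_length_eq_add_one hS.1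
  have hT : T.length = l.length := by simpa using hS.1
  rw [profit, List.map_cons, List.sum_cons, hS.cons_head, ← hT, ← nsmul_eq_mul,
    ← List.length_map (f := freq (a :: l))]
  gcongr
  exact List.sum_le_card_nsmul _ _ (by simpa using fun c _ => hq c)

theorem optP_cons_cons_of_freq_le {a b : ℕ} {l : List ℕ}
    (hb : ∀ c, freq (a :: b :: l) c ≤ freq (a :: b :: l) b) :
    optP (a :: b :: l) = freq (a :: b :: l) a + (l.length + 1) * freq (a :: b :: l) b := by
  refine IsGreatest.csSup_eq ⟨⟨_, validSched_cons_replicate a b l, ?_⟩, ?_⟩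
  · simp [profit]
  · rintro _ ⟨S, hS, rfl⟩
    simpa using profit_le_of_freq_le hS hb

def pairs (m : ℕ) : List ℕ := (List.range m).flatMap fun i => [i + 1, 0]

lemma length_pairs (m : ℕ) : (pairs m).length = 2 * m := by
  simp [pairs, List.length_flatMap, mul_comm]

lemma pairs_succ (m : ℕ) : pairs (m + 1) = pairs m ++ [m + 1, 0] := by
  simp [pairs, List.range_succ]

lemma count_zero_pairs (m : ℕ) : (pairs m).count 0 = m := by
  induction m with
  | zero => rfl
  | succ m ih => simp [pairs_succ, ih]

lemma count_pairs {a : ℕ} (ha : a ≠ 0) (m : ℕ) : (pairs m).count a = if a ≤ m then 1 else 0 := by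
  induction m with
  | zero => simp [pairs, ha]
  | succ m ih =>
    rw [pairs_succ, List.count_append, ih]
    simp only [List.count_cons, List.count_nil, beq_iff_eq]
    split_ifs <;> omega

lemma Wseq_eq (n : ℕ) : Wseq n = pairs (n / 2) ++ if n % 2 = 1 then [n / 2 + 1] else [] := rfl

lemma length_Wseq (n : ℕ) : (Wseq n).length = n := by
  rw [Wseq_eq, List.length_append, length_pairs]
  split_ifs <;> simp only [List.length_cons, List.length_nil] <;> omega

lemma Wseq_eq_cons {n : ℕ} (hn : 2 ≤ n) : ∃ t, Wseq n = 1 :: 0 :: t := by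
  obtain ⟨m, hm⟩ : ∃ m, n / 2 = m + 1 := ⟨n / 2 - 1, by omega⟩
  simp [Wseq_eq, hm, pairs, List.range_succ_eq_map]

lemma count_zero_Wseq (n : ℕ) : (Wseq n).count 0 = n / 2 := by
  rw [Wseq_eq, List.count_append, count_zero_pairs]
  split_ifs <;> simp

lemma count_Wseq_le_one {a : ℕ} (ha : a ≠ 0) (n : ℕ) : (Wseq n).count a ≤ 1 := by
  rw [Wseq_eq, List.count_append, count_pairs ha]
  simp only [apply_ite (List.count a), List.count_singleton', List.count_nil]
  split_ifs <;> omega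

lemma freq_Wseq_le_freq_zero {n : ℕ} (hn : 2 ≤ n) (c : ℕ) : freq (Wseq n) c ≤ freq (Wseq n) 0 := by
  refine freq_le_freq_of_count_le ?_
  rcases eq_or_ne c 0 with rfl | hc
  · rfl
  · rw [count_zero_Wseq]
    exact (count_Wseq_le_one hc n).trans (by omega)

lemma optP_Wseq {n : ℕ} (hn : 2 ≤ n) : optP (Wseq n) = (1 + (n - 1) * (n / 2 : ℕ)) / n := by
  obtain ⟨t, ht⟩ := Wseq_eq_cons hn
  have hlen : (t.length : ℝ) + 1 = n - 1 := by
    have : t.length + 2 = n := by simpa [ht] using length_Wseq n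
    rw [← this]
    push_cast
    ring
  have hcount_one : (Wseq n).count 1 = 1 :=
    le_antisymm (count_Wseq_le_one one_ne_zero n) (List.count_pos_iff.2 (by simp [ht]))
  have hopt := optP_cons_cons_of_freq_le (a := 1) (ht ▸ freq_Wseq_le_freq_zero hn)
  rw [← ht, hlen] at hopt
  rw [hopt, freq, freq, hcount_one, count_zero_Wseq, length_Wseq]
  ring

/-- Opt(W_n) = n/2 - 1/2 + 1/n for even n, and n/2 - 1 + 3/(2n) for odd n. -/
theorem stmt6 (n : ℕ) (hn : 2 ≤ n) :
    (Even n → optP (Wseq n) = (n : ℝ) / 2 - 1 / 2 + 1 / n) ∧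
    (Odd n → optP (Wseq n) = (n : ℝ) / 2 - 1 + 3 / (2 * n)) := by
  rw [optP_Wseq hn]
  constructor
  · rintro ⟨k, rfl⟩
    have hk : (k : ℝ) ≠ 0 := by norm_cast; omega
    rw [show (k + k) / 2 = k by omega]
    push_cast
    field_simp
    ring
  · rintro ⟨k, rfl⟩
    rw [show (2 * k + 1) / 2 = k by omega]
    push_cast
    field_simp
    ring
end

section
/- For every input sequence I of length n ≥ 4, Opt(I) ≤ (n/2)·Maj(I). -/
open scoped BigOperators

/-! The Majority counter for a fixed item `a`, read as a signed quantity, gains at least one on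
every occurrence of `a` and loses at most one otherwise, so at the end of the run it is at least
`2 · #a − n`; and its positive part only grows on steps at which `a` is buffered. Hence a majority
item `a` with frequency `f > 1/2` is buffered at least `(2f − 1)n` times, each contributing `f`,
which gives `Maj(I) ≥ 2f`; if `f ≤ 1/2`, already `Maj(I) ≥ 1 ≥ 2f`. Compare with `Opt(I) ≤ n f`. -/

def majBuffersFrom (s : ℕ × ℕ) (L : List ℕ) : List ℕ :=
  ((List.scanl majStep s L).tail).map Prod.fst

@[simp]
lemma majBuffersFrom_nil (s : ℕ × ℕ) : majBuffersFrom s [] = [] := by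
  simp [majBuffersFrom]

lemma majBuffersFrom_cons (s : ℕ × ℕ) (x : ℕ) (L : List ℕ) :
    majBuffersFrom s (x :: L) = (majStep s x).1 :: majBuffersFrom (majStep s x) L := by
  cases L <;> simp [majBuffersFrom]

lemma majBuffers_eq_majBuffersFrom (I : List ℕ) : majBuffers I = majBuffersFrom (0, 0) I := rfl

-- The side condition `s.2 ≠ 0` keeps the dummy buffer of the initial state `(0, 0)` out.
lemma mem_of_mem_majBuffersFrom {b : ℕ} :
    ∀ {L : List ℕ} {s : ℕ × ℕ}, b ∈ majBuffersFrom s L → b ∈ L ∨ (s.2 ≠ 0 ∧ b = s.1)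
  | [], _, hb => by simp at hb
  | x :: L, s, hb => by
    rw [majBuffersFrom_cons, List.mem_cons] at hb
    rcases hb with rfl | hb
    · unfold majStep; split_ifs <;> simp_all
    · have := mem_of_mem_majBuffersFrom hb
      unfold majStep at this; split_ifs at this <;> simp_all <;> tauto

lemma mem_of_mem_majBuffers {I : List ℕ} {b : ℕ} (hb : b ∈ majBuffers I) : b ∈ I := by
  rw [majBuffers_eq_majBuffersFrom] at hb
  simpa using mem_of_mem_majBuffersFrom hb

def signedCounter (a : ℕ) (s : ℕ × ℕ) : ℤ := if s.1 = a then s.2 else -s.2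

lemma signedCounter_add_le_majStep (a x : ℕ) (s : ℕ × ℕ) :
    signedCounter a s + (if x = a then 1 else -1) ≤ signedCounter a (majStep s x) := by
  unfold signedCounter majStep
  split_ifs <;> simp_all <;> omega

lemma max_signedCounter_majStep_le (a x : ℕ) (s : ℕ × ℕ) :
    max (signedCounter a (majStep s x)) 0 ≤
      max (signedCounter a s) 0 + if (majStep s x).1 = a then 1 else 0 := by
  unfold signedCounter majStep
  split_ifs <;> simp_all <;> omega

lemma signedCounter_foldl_majStep_ge (a : ℕ) :
    ∀ (L : List ℕ) (s : ℕ × ℕ),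
      signedCounter a s + 2 * L.count a - L.length ≤ signedCounter a (L.foldl majStep s)
  | [], s => by simp
  | x :: L, s => by
    have hstep := signedCounter_add_le_majStep a x s
    have ih := signedCounter_foldl_majStep_ge a L (majStep s x)
    simp only [List.foldl_cons, List.count_cons, List.length_cons, beq_iff_eq] at *
    split_ifs at * <;> push_cast at * <;> omega

lemma max_signedCounter_foldl_majStep_le (a : ℕ) :
    ∀ (L : List ℕ) (s : ℕ × ℕ),
      max (signedCounter a (L.foldl majStep s)) 0 ≤
        max (signedCounter a s) 0 + (majBuffersFrom s L).count a
  | [], s => by simp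
  | x :: L, s => by
    have hstep := max_signedCounter_majStep_le a x s
    have ih := max_signedCounter_foldl_majStep_le a L (majStep s x)
    simp only [List.foldl_cons, majBuffersFrom_cons, List.count_cons, beq_iff_eq] at *
    split_ifs at * <;> push_cast at * <;> omega

lemma two_mul_count_le_count_majBuffers_add_length (I : List ℕ) (a : ℕ) :
    2 * I.count a ≤ (majBuffers I).count a + I.length := by
  have hlow := signedCounter_foldl_majStep_ge a I (0, 0)
  have hhigh := max_signedCounter_foldl_majStep_le a I (0, 0)
  have hinit : signedCounter a (0, 0) = 0 := by simp [signedCounter]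
  have hpart := le_max_left (signedCounter a (I.foldl majStep (0, 0))) 0
  rw [majBuffers_eq_majBuffersFrom]
  omega

lemma count_mul_add_le_sum_map (f : ℕ → ℕ) (a : ℕ) :
    ∀ B : List ℕ, (∀ b ∈ B, 1 ≤ f b) → B.count a * f a + (B.length - B.count a) ≤ (B.map f).sum
  | [], _ => by simp
  | x :: B, hB => by
    have hx := hB x List.mem_cons_self
    have ih := count_mul_add_le_sum_map f a B fun b hb => hB b (List.mem_cons_of_mem _ hb)
    have := B.count_le_length (a := a)
    simp only [List.count_cons, List.length_cons, List.map_cons, List.sum_cons, beq_iff_eq]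
    split_ifs with hxa
    · subst hxa; rw [add_mul, one_mul]; omega
    · rw [add_zero]; omega

lemma two_mul_count_le_sum_count_majBuffers {I : List ℕ} (hI : 2 ≤ I.length) (a : ℕ) :
    2 * I.count a ≤ ((majBuffers I).map I.count).sum := by
  have hlen : (majBuffers I).length = I.length := by simp [majBuffers, List.length_scanl]
  have hsum := count_mul_add_le_sum_map I.count a (majBuffers I) fun b hb =>
    List.count_pos_iff.2 (mem_of_mem_majBuffers hb)
  rw [hlen] at hsum
  rcases Nat.eq_zero_or_pos (I.count a) with hzero | hpos
  · omega
  have hbuffered := two_mul_count_le_count_majBuffers_add_length I a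
  rcases le_or_gt (2 * I.count a) I.length with hsmall | hlarge
  · have := Nat.le_mul_of_pos_right ((majBuffers I).count a) hpos
    omega
  · have := Nat.mul_le_mul_left ((majBuffers I).count a) (show 2 ≤ I.count a by omega)
    omega

lemma profit_eq_sum_count_div (I S : List ℕ) :
    profit I S = ((S.map I.count).sum : ℝ) / I.length := by
  rw [profit, div_eq_mul_inv, Nat.cast_list_sum, List.map_map, ← List.sum_map_mul_right]
  rfl

lemma optP_le_of_count_le {I : List ℕ} {m : ℕ} (hm : ∀ x, I.count x ≤ m) : optP I ≤ m := by
  refine Real.sSup_le ?_ m.cast_nonneg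
  rintro _ ⟨S, ⟨hlen, -⟩, rfl⟩
  rw [profit_eq_sum_count_div]
  refine div_le_of_le_mul₀ I.length.cast_nonneg m.cast_nonneg ?_
  have := List.sum_le_card_nsmul (S.map I.count) m (by simpa using fun b _ => hm b)
  rw [List.length_map, hlen, smul_eq_mul] at this
  rw [mul_comm]
  exact_mod_cast this

lemma List.exists_forall_count_le (I : List ℕ) : ∃ a, ∀ x, I.count x ≤ I.count a := by
  obtain ⟨a, -, hmax⟩ := (0 :: I).toFinset.exists_max_image I.count ⟨0, by simp⟩
  refine ⟨a, fun x => ?_⟩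
  by_cases hx : x ∈ I
  · exact hmax x (by simp [hx])
  · simp [List.count_eq_zero_of_not_mem hx]

/-- Opt(I) ≤ (n/2)·Maj(I) for every I of length n ≥ 4. -/
theorem stmt10 (I : List ℕ) (h : 4 ≤ I.length) :
    optP I ≤ (I.length : ℝ) / 2 * majP I := by
  obtain ⟨a, hmax⟩ := I.exists_forall_count_le
  have hmaj : (2 * I.count a : ℝ) ≤ ((majBuffers I).map I.count).sum := by
    exact_mod_cast two_mul_count_le_sum_count_majBuffers (by omega) a
  have hn : (I.length : ℝ) ≠ 0 := by norm_cast; omega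
  calc optP I ≤ I.count a := optP_le_of_count_le hmax
    _ ≤ ((majBuffers I).map I.count).sum / 2 := by linarith
    _ = I.length / 2 * majP I := by
      rw [majP, profit_eq_sum_count_div]
      field_simp
end

section
/- The relative interval of Nai versus Eag is [−1/4, 1]: limsup_n max_{|I|=n}(Nai(I)−Eag(I))/n = 1 and liminf_n min_{|I|=n}(Nai(I)−Eag(I))/n = −1/4. -/
open scoped BigOperators

/-!
Nai and Eag buffer the same items until the first repeat `a, a` of the input `I = P ++ a :: a :: T`,
after which Eag keeps `a`; so `Nai - Eag = profit I T - |T| · freq a`. Every one of the `x` items of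
`T` other than `a` is worth at least `1/n`, hence `n · (Nai - Eag) ≥ -x (c - 1)` where `c` is the
count of `a`. Since `x + c ≤ n`, AM-GM gives `Nai - Eag ≥ -n/4`, while `Nai - Eag ≤ n` is trivial.
The sequences `a, a, b, …, b` and `⌈n/2⌉` copies of `a` followed by distinct items attain
`n - O(1)` and `-n/4 + O(1)`.
-/

open Filter Topology

section Profit

variable (I : List ℕ)

lemma freq_nonneg (a : ℕ) : 0 ≤ freq I a := by
  unfold freq; positivity

lemma freq_le_one (a : ℕ) : freq I a ≤ 1 :=
  div_le_one_of_le₀ (mod_cast I.count_le_length) (Nat.cast_nonneg _)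

lemma inv_length_le_freq {a : ℕ} (ha : a ∈ I) : (I.length : ℝ)⁻¹ ≤ freq I a := by
  rw [freq, div_eq_mul_inv]
  exact le_mul_of_one_le_left (by positivity) (mod_cast List.count_pos_iff.mpr ha)

@[simp] lemma profit_nil : profit I [] = 0 := rfl

@[simp] lemma profit_cons (x : ℕ) (S : List ℕ) :
    profit I (x :: S) = freq I x + profit I S := by
  simp [profit]

@[simp] lemma profit_append (S T : List ℕ) : profit I (S ++ T) = profit I S + profit I T := by
  simp [profit]

lemma profit_eq_length_mul {S : List ℕ} {q : ℝ} (h : ∀ t ∈ S, freq I t = q) :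
    profit I S = S.length * q := by
  rw [profit, List.map_congr_left h, List.map_const', List.sum_replicate, nsmul_eq_mul]

lemma profit_replicate (k a : ℕ) : profit I (List.replicate k a) = k * freq I a := by
  rw [profit_eq_length_mul I (q := freq I a) (fun t ht => by rw [List.eq_of_mem_replicate ht]),
    List.length_replicate]

lemma profit_nonneg (S : List ℕ) : 0 ≤ profit I S :=
  List.sum_nonneg (by simp only [List.mem_map]; rintro _ ⟨a, -, rfl⟩; exact freq_nonneg I a)

lemma profit_le_length (S : List ℕ) : profit I S ≤ S.length := by
  induction S with
  | nil => simp
  | cons x S ih => simp only [profit_cons, List.length_cons]; push_cast; linarith [freq_le_one I x]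

lemma count_mul_freq_add_le_profit {T : List ℕ} (hT : ∀ t ∈ T, t ∈ I) (a : ℕ) :
    T.count a * freq I a + (T.length - T.count a) * (I.length : ℝ)⁻¹ ≤ profit I T := by
  induction T with
  | nil => simp
  | cons t T ih =>
    have ih := ih fun s hs => hT s (List.mem_cons_of_mem t hs)
    rw [profit_cons, List.count_cons, List.length_cons]
    by_cases hta : t = a
    · subst hta; simp only [beq_self_eq_true, if_true]; push_cast; linarith
    · have := inv_length_le_freq I (hT t List.mem_cons_self)
      simp only [beq_iff_eq, hta, if_false, add_zero]
      push_cast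
      linarith

end Profit

section Eager

@[simp] lemma eagRun_cons_cons_self (a : ℕ) (rest : List ℕ) :
    eagRun (a :: a :: rest) = List.replicate (rest.length + 2) a := by
  simp [eagRun, List.replicate_succ]

lemma eagRun_eq_self_or_exists_repeat : ∀ I : List ℕ, eagRun I = I ∨
    ∃ P a T, I = P ++ a :: a :: T ∧ eagRun I = P ++ List.replicate (T.length + 2) a
  | [] => Or.inl rfl
  | [_] => Or.inl rfl
  | x :: y :: rest => by
    by_cases hxy : x = y
    · subst hxy
      exact Or.inr ⟨[], x, rest, rfl, eagRun_cons_cons_self x rest⟩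
    · rw [eagRun, if_neg hxy]
      rcases eagRun_eq_self_or_exists_repeat (y :: rest) with h | ⟨P, a, T, hI, hE⟩
      · exact Or.inl (by rw [h])
      · exact Or.inr ⟨x :: P, a, T, by rw [hI]; rfl, by rw [hE]; rfl⟩

lemma eagP_cons_cons_self (a : ℕ) (rest : List ℕ) :
    eagP (a :: a :: rest) = (a :: a :: rest).count a := by
  rw [eagP, eagRun_cons_cons_self, profit_replicate, freq, List.length_cons, List.length_cons]
  field_simp

lemma naiP_sub_eagP_of_repeat {I P T : List ℕ} {a : ℕ} (hI : I = P ++ a :: a :: T)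
    (hE : eagRun I = P ++ List.replicate (T.length + 2) a) :
    naiP I - eagP I = profit I T - T.length * freq I a := by
  rw [naiP, eagP, hE]
  nth_rw 2 [hI]
  simp only [profit_append, profit_cons, profit_replicate]
  push_cast
  ring

lemma naiP_sub_eagP_le_length (I : List ℕ) : naiP I - eagP I ≤ I.length := by
  rw [naiP, eagP]
  linarith [profit_le_length I I, profit_nonneg I (eagRun I)]

theorem neg_length_div_four_le_naiP_sub_eagP (I : List ℕ) :
    -((I.length : ℝ) / 4) ≤ naiP I - eagP I := by
  rcases eagRun_eq_self_or_exists_repeat I with hE | ⟨P, a, T, hI, hE⟩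
  · rw [naiP, eagP, hE, sub_self, neg_nonpos]
    positivity
  set N : ℝ := (I.length : ℝ)
  set c : ℝ := (I.count a : ℝ)
  set x : ℝ := (T.length : ℝ) - T.count a
  have hN : 0 < N := by
    have : I.length ≠ 0 := by simp [hI]
    positivity
  have hc : 1 ≤ c := by
    have : a ∈ I := by simp [hI]
    exact Nat.one_le_cast.mpr (List.count_pos_iff.mpr this)
  have hx : 0 ≤ x := sub_nonneg.mpr (mod_cast T.count_le_length)
  have hcx : c + x ≤ N := by
    have hcount : I.count a + (T.length - T.count a) ≤ I.length := by
      have := P.count_le_length (a := a)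
      have := T.count_le_length (a := a)
      simp [hI]
      omega
    simp only [c, x, N]
    rw [← Nat.cast_sub T.count_le_length, ← Nat.cast_add]
    exact mod_cast hcount
  have hprofit := count_mul_freq_add_le_profit I (T := T) (fun t ht => by simp [hI, ht]) a
  have hdiff : -(x * (c - 1)) / N ≤ naiP I - eagP I := by
    rw [naiP_sub_eagP_of_repeat hI hE, freq]
    have : (T.length : ℝ) = T.count a + x := by ring
    rw [this]
    calc -(x * (c - 1)) / N = T.count a * (c / N) + x * N⁻¹ - (T.count a + x) * (c / N) := by
          field_simp; ring
      _ ≤ _ := by rw [freq] at hprofit; linarith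
  -- AM-GM: `4 x (c - 1) ≤ (x + c - 1)² ≤ N²`
  have hamgm : x * (c - 1) ≤ N ^ 2 / 4 := by
    nlinarith [four_mul_le_sq_add x (c - 1)]
  calc -(N / 4) = -(N ^ 2 / 4) / N := by field_simp
    _ ≤ -(x * (c - 1)) / N := by gcongr
    _ ≤ naiP I - eagP I := hdiff

end Eager

section Witnesses

lemma naiP_sub_eagP_Eseq {n a b : ℕ} (hn : 2 ≤ n) (hab : a ≠ b) :
    naiP (Eseq n a b) - eagP (Eseq n a b) = n - 6 + 8 / n := by
  obtain ⟨m, rfl⟩ : ∃ m, n = m + 2 := ⟨n - 2, by omega⟩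
  set I := a :: a :: List.replicate m b
  have hE : Eseq (m + 2) a b = I := by simp [Eseq, I]
  have hlen : I.length = m + 2 := by simp [I]
  have hcount_a : I.count a = 2 := by simp [I, List.count_replicate, hab.symm]
  have hcount_b : I.count b = m := by simp [I, hab]
  rw [hE, naiP, eagP_cons_cons_self, profit_cons, profit_cons, profit_replicate, freq, freq,
    hcount_a, hcount_b, hlen]
  push_cast
  field_simp
  ring

lemma naiP_sub_eagP_replicate_append {a c : ℕ} {L : List ℕ} (hc : 2 ≤ c) (hL : L.Nodup)
    (ha : a ∉ L) :
    naiP (List.replicate c a ++ L) - eagP (List.replicate c a ++ L)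
      = -(L.length * (c - 1) : ℝ) / (c + L.length) := by
  set I := List.replicate c a ++ L
  have hlen : (I.length : ℝ) = c + L.length := by simp [I]
  have hcount_a : I.count a = c := by simp [I, List.count_eq_zero_of_not_mem ha]
  have hfreq_L : ∀ t ∈ L, freq I t = 1 / I.length := by
    intro t ht
    have hta : a ≠ t := fun h => ha (h ▸ ht)
    simp [freq, I, List.count_replicate, hta, List.count_eq_one_of_mem hL ht]
  have heag : eagP I = c := by
    obtain ⟨c', rfl⟩ : ∃ c', c = c' + 2 := ⟨c - 2, by omega⟩
    have hI : I = a :: a :: (List.replicate c' a ++ L) := by simp [I, List.replicate_succ]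
    rw [hI, eagP_cons_cons_self, ← hI, hcount_a]
  rw [heag, naiP, profit_append, profit_replicate, profit_eq_length_mul I hfreq_L, freq,
    hcount_a, hlen]
  have : (0 : ℝ) < c + L.length := by positivity
  field_simp
  ring

lemma naiP_sub_eagP_Iseq_le {n : ℕ} (hn : 3 ≤ n) :
    naiP (Iseq n) - eagP (Iseq n) ≤ -((n : ℝ) / 4) + 1 / 2 := by
  have hn' : (n : ℝ) = ((n + 1) / 2 : ℕ) + (n / 2 : ℕ) := mod_cast (by omega)
  have hpos : (0 : ℝ) < n := mod_cast (by omega)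
  have hkc : (n + 1) / 2 = n / 2 ∨ (n + 1) / 2 = n / 2 + 1 := by omega
  rw [Iseq, naiP_sub_eagP_replicate_append (by omega) (List.nodup_range.map Nat.succ_injective)
    (by simp), List.length_map, List.length_range, ← hn', div_le_iff₀ hpos, hn']
  generalize n / 2 = k at *
  rcases hkc with h | h <;> rw [h] <;> push_cast <;> nlinarith

end Witnesses

section Extremes

variable {f g : List ℕ → ℝ} {n : ℕ} {B : ℝ}

lemma maxDiff_le (h : ∀ I : List ℕ, I.length = n → f I - g I ≤ B) : maxDiff f g n ≤ B :=
  csSup_le ⟨_, List.replicate n 0, List.length_replicate, rfl⟩ <| by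
    rintro _ ⟨I, hI, rfl⟩
    exact h I hI

lemma le_maxDiff (h : ∀ I : List ℕ, I.length = n → f I - g I ≤ B) {I : List ℕ}
    (hI : I.length = n) : f I - g I ≤ maxDiff f g n :=
  le_csSup ⟨B, by rintro _ ⟨J, hJ, rfl⟩; exact h J hJ⟩ ⟨I, hI, rfl⟩

lemma le_minDiff (h : ∀ I : List ℕ, I.length = n → B ≤ f I - g I) : B ≤ minDiff f g n :=
  le_csInf ⟨_, List.replicate n 0, List.length_replicate, rfl⟩ <| by
    rintro _ ⟨I, hI, rfl⟩
    exact h I hI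

lemma minDiff_le (h : ∀ I : List ℕ, I.length = n → B ≤ f I - g I) {I : List ℕ}
    (hI : I.length = n) : minDiff f g n ≤ f I - g I :=
  csInf_le ⟨B, by rintro _ ⟨J, hJ, rfl⟩; exact h J hJ⟩ ⟨I, hI, rfl⟩

end Extremes

lemma tendsto_div_natCast_of_abs_sub_le {u : ℕ → ℝ} {a C : ℝ}
    (h : ∀ᶠ n in atTop, |u n - a * n| ≤ C) : Tendsto (fun n => u n / n) atTop (𝓝 a) := by
  have herr : Tendsto (fun n : ℕ => (u n - a * n) / n) atTop (𝓝 0) := by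
    refine squeeze_zero_norm' (h.mono fun n hn => ?_) (tendsto_const_div_atTop_nhds_zero_nat C)
    rw [norm_div, Real.norm_natCast, Real.norm_eq_abs]
    gcongr
  have hsplit : (fun n : ℕ => a + (u n - a * n) / n) =ᶠ[atTop] fun n => u n / n := by
    filter_upwards [eventually_ne_atTop 0] with n hn
    field_simp
    ring
  simpa using (herr.const_add a).congr' hsplit

/-- the relative interval of Nai versus Eag is [−1/4, 1]. -/
theorem stmt13 :
    Filter.limsup (fun n => maxDiff naiP eagP n / (n : ℝ)) Filter.atTop = 1 ∧
    Filter.liminf (fun n => minDiff naiP eagP n / (n : ℝ)) Filter.atTop = -(1 / 4) := by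
  have hupper : ∀ n : ℕ, ∀ I : List ℕ, I.length = n → naiP I - eagP I ≤ n :=
    fun n I hI => hI ▸ naiP_sub_eagP_le_length I
  have hlower : ∀ n : ℕ, ∀ I : List ℕ, I.length = n → -((n : ℝ) / 4) ≤ naiP I - eagP I :=
    fun n I hI => hI ▸ neg_length_div_four_le_naiP_sub_eagP I
  have hmax : ∀ n ≥ 2, |maxDiff naiP eagP n - 1 * n| ≤ 6 := by
    intro n hn
    have hE := le_maxDiff (hupper n) (I := Eseq n 0 1) (by simp [Eseq]; omega)
    rw [naiP_sub_eagP_Eseq hn zero_ne_one] at hE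
    have : (0 : ℝ) ≤ 8 / n := by positivity
    rw [abs_le]
    constructor <;> linarith [maxDiff_le (hupper n)]
  have hmin : ∀ n ≥ 3, |minDiff naiP eagP n - -(1 / 4) * n| ≤ 1 / 2 := by
    intro n hn
    have hI := minDiff_le (hlower n) (I := Iseq n) (by simp [Iseq]; omega)
    rw [abs_le]
    constructor <;> linarith [le_minDiff (hlower n), naiP_sub_eagP_Iseq_le hn]
  exact ⟨(tendsto_div_natCast_of_abs_sub_le (eventually_atTop.2 ⟨2, hmax⟩)).limsup_eq,
    (tendsto_div_natCast_of_abs_sub_le (eventually_atTop.2 ⟨3, hmin⟩)).liminf_eq⟩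
end
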